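/- Let A be a strongly connected NFA with m states. The set MBF(A) of all minimal blocking factors of A is a regular language over the alphabet ℤ/λℤ × Σ, recognized by an NFA whose number of states is at most 2^{Cm} for some constant C independent of A and m. -/

import Mathlib

open scoped ENNReal

structure NFA' (Q : Type) (A : Type) where
  step : Q → A → Set Q
  init : Q
  final : Set Q

namespace NFA'

variable {Q A : Type}

inductive Run (M : NFA' Q A) : Q → List A → Q → Prop
  | nil (q : Q) : Run M q [] q
  | cons {p q r : Q} {a : A} {w : List A} :
      q ∈ M.step p a → Run M q w r → Run M p (a :: w) r

def lang (M : NFA' Q A) : Set (List A) := {w | ∃ q ∈ M.final, M.Run M.init w q}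

def Reachable (M : NFA' Q A) (s t : Q) : Prop := ∃ w, M.Run s w t

def StronglyConnected (M : NFA' Q A) : Prop := ∀ s t : Q, M.Reachable s t

def Trim (M : NFA' Q A) : Prop :=
  (∀ q, M.Reachable M.init q) ∧ (∀ q, ∃ f ∈ M.final, M.Reachable q f)

def IsPeriod (M : NFA' Q A) (l : ℕ) : Prop :=
  0 < l ∧ (∀ (q : Q) (w : List A), w ≠ [] → M.Run q w q → l ∣ w.length) ∧
    ∀ d : ℕ, (∀ (q : Q) (w : List A), w ≠ [] → M.Run q w q → d ∣ w.length) → d ∣ l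

end NFA'

def posWord {A : Type} (l : ℕ) (n : ℕ) (u : List A) : List (ZMod l × A) :=
  u.zipIdx.map fun ka => (((n + ka.2 : ℕ) : ZMod l), ka.1)

def IsPosWord {A : Type} (l : ℕ) (τ : List (ZMod l × A)) : Prop :=
  ∃ (n : ℕ) (u : List A), τ = posWord l n u

def NFA'.posLang {Q A : Type} (M : NFA' Q A) (l : ℕ) : Set (List (ZMod l × A)) :=
  {τ | ∃ u ∈ M.lang, τ = posWord l 0 u}

def NFA'.Blocking {Q A : Type} (M : NFA' Q A) (l : ℕ) (τ : List (ZMod l × A)) : Prop :=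
  IsPosWord l τ ∧ ∀ μ : List (ZMod l × A), IsPosWord l μ → τ <:+: μ → μ ∉ M.posLang l

def NFA'.MinBlocking {Q A : Type} (M : NFA' Q A) (l : ℕ) (τ : List (ZMod l × A)) : Prop :=
  M.Blocking l τ ∧ ∀ μ : List (ZMod l × A), μ <:+: τ → μ ≠ τ → ¬ M.Blocking l μ

open Classical in
noncomputable def hamming {A : Type} (u v : List A) : ℝ≥0∞ :=
  if u.length = v.length then
    (((Finset.range u.length).filter fun k => u[k]? ≠ v[k]?).card : ℝ≥0∞)
  else ⊤

noncomputable def hammingSet {A : Type} (u : List A) (L : Set (List A)) : ℝ≥0∞ :=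
  ⨅ v ∈ L, hamming u v

inductive Scattered {α : Type} : List (List α) → List α → Prop
  | nil (τ : List α) : Scattered [] τ
  | cons (pre f : List α) (fs : List (List α)) (rest : List α) :
      Scattered fs rest → Scattered (f :: fs) (pre ++ f ++ rest)

inductive NFA'.Path {Q A : Type} (M : NFA' Q A) : Q → List Q → Q → Prop
  | nil (q : Q) : NFA'.Path M q [] q
  | cons {p q r : Q} {l : List Q} (a : A) :
      q ∈ M.step p a → NFA'.Path M q l r → NFA'.Path M p (q :: l) r

def NFA'.SimpleCycleLength {Q A : Type} (M : NFA' Q A) (n : ℕ) : Prop :=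
  ∃ (q : Q) (l : List Q), l.length = n ∧ l ≠ [] ∧ l.Nodup ∧ M.Path q l q

def NFA'.IsCycleLcm {Q A : Type} (M : NFA' Q A) (p : ℕ) : Prop :=
  (∀ n, M.SimpleCycleLength n → n ∣ p) ∧
    ∀ d : ℕ, (∀ n, M.SimpleCycleLength n → n ∣ d) → p ∣ d

def NFA'.SameSCC {Q A : Type} (M : NFA' Q A) (s t : Q) : Prop :=
  M.Reachable s t ∧ M.Reachable t s

structure Portal (Q : Type) (p : ℕ) where
  s : Q
  x : ZMod p
  t : Q
  y : ZMod p

def ValidPortal {Q A : Type} (M : NFA' Q A) {p : ℕ} (P : Portal Q p) : Prop :=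
  M.SameSCC P.s P.t

def portalLang {Q A : Type} (M : NFA' Q A) {p : ℕ} (P : Portal Q p) :
    Set (List (ZMod p × A)) :=
  {τ | ∃ w : List A, M.Run P.s w P.t ∧ P.x + (w.length : ZMod p) = P.y ∧
    τ = posWord p P.x.val w}

def PortalBlocking {Q A : Type} (M : NFA' Q A) {p : ℕ} (P : Portal Q p)
    (τ : List (ZMod p × A)) : Prop :=
  ∀ μ ∈ portalLang M P, ¬ τ <:+: μ

def IsSCCPath {Q A : Type} (M : NFA' Q A) {p : ℕ} :
    Portal Q p → List (A × Portal Q p) → Prop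
  | P0, [] => ValidPortal M P0
  | P0, (a, P) :: rest =>
      ValidPortal M P0 ∧ P.x = P0.y + 1 ∧ P.s ∈ M.step P0.t a ∧
        ¬ M.Reachable P.s P0.t ∧ IsSCCPath M P rest

def sccPathLang {Q A : Type} (M : NFA' Q A) {p : ℕ} :
    Portal Q p → List (A × Portal Q p) → Set (List (ZMod p × A))
  | P0, [] => portalLang M P0
  | P0, (a, P) :: rest =>
      {τ | ∃ τ₁ τ₂, τ₁ ∈ portalLang M P0 ∧ τ₂ ∈ sccPathLang M P rest ∧
        τ = τ₁ ++ (P0.y + 1, a) :: τ₂}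

def portalsOf {Q A : Type} {p : ℕ} (P0 : Portal Q p) (steps : List (A × Portal Q p)) :
    List (Portal Q p) :=
  P0 :: steps.map Prod.snd

def lastPortal {Q A : Type} {p : ℕ} (P0 : Portal Q p) (steps : List (A × Portal Q p)) :
    Portal Q p :=
  (steps.map Prod.snd).getLastD P0

def IsAcceptingSCCPath {Q A : Type} (M : NFA' Q A) {p : ℕ} (P0 : Portal Q p)
    (steps : List (A × Portal Q p)) : Prop :=
  IsSCCPath M P0 steps ∧ P0.s = M.init ∧ P0.x = 0 ∧
    (lastPortal P0 steps).t ∈ M.final ∧ (sccPathLang M P0 steps).Nonempty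

def BlockingSeqFor {Q A : Type} (M : NFA' Q A) {p : ℕ} (σ : List (List (ZMod p × A)))
    (P0 : Portal Q p) (steps : List (A × Portal Q p)) : Prop :=
  ∃ idx : Fin (portalsOf P0 steps).length → Fin σ.length,
    Monotone idx ∧ ∀ j, PortalBlocking M ((portalsOf P0 steps).get j) (σ.get (idx j))

def StronglyBlockingSeqFor {Q A : Type} (M : NFA' Q A) {p : ℕ}
    (σ : List (List (ZMod p × A))) (P0 : Portal Q p) (steps : List (A × Portal Q p)) : Prop :=
  ∃ idx : Fin (portalsOf P0 steps).length → Fin σ.length,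
    StrictMono idx ∧ ∀ j, PortalBlocking M ((portalsOf P0 steps).get j) (σ.get (idx j))

def BlockingSeqForNFA {Q A : Type} (M : NFA' Q A) {p : ℕ}
    (σ : List (List (ZMod p × A))) : Prop :=
  ∀ (P0 : Portal Q p) (steps : List (A × Portal Q p)),
    IsAcceptingSCCPath M P0 steps → BlockingSeqFor M σ P0 steps

def SeqLE {α : Type} (σ σ' : List (List α)) : Prop :=
  ∃ idx : Fin σ.length → Fin σ'.length,
    Monotone idx ∧ ∀ j, σ.get j <:+: σ'.get (idx j)

def MinBlockingSeq {Q A : Type} (M : NFA' Q A) {p : ℕ}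
    (σ : List (List (ZMod p × A))) : Prop :=
  BlockingSeqForNFA M σ ∧
    ∀ σ' : List (List (ZMod p × A)), BlockingSeqForNFA M σ' → SeqLE σ' σ → SeqLE σ σ'

noncomputable def leftEffect {Q A : Type} (M : NFA' Q A) {p : ℕ}
    (σ : List (List (ZMod p × A))) (P0 : Portal Q p) (steps : List (A × Portal Q p)) : ℤ :=
  ((sSup {j : ℕ | ∃ i : ℕ, j = i + 1 ∧ i ≤ steps.length ∧
    BlockingSeqFor M σ P0 (steps.take i)} : ℕ) : ℤ) - 1



section AuxMBF

namespace NFA'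

variable {Q A : Type}

lemma run_nil_iff {M : NFA' Q A} {q r : Q} : M.Run q [] r ↔ q = r := by
  constructor
  · rintro h; cases h; rfl
  · rintro rfl; exact .nil q

lemma run_cons_iff {M : NFA' Q A} {q r : Q} {a : A} {w : List A} :
    M.Run q (a :: w) r ↔ ∃ s, s ∈ M.step q a ∧ M.Run s w r := by
  constructor
  · rintro h; cases h with | cons hs hr => exact ⟨_, hs, hr⟩
  · rintro ⟨s, hs, hr⟩; exact .cons hs hr

lemma Run.append' {M : NFA' Q A} {q s r : Q} {u v : List A}
    (h1 : M.Run q u s) (h2 : M.Run s v r) : M.Run q (u ++ v) r := by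
  induction u generalizing q with
  | nil => rw [run_nil_iff] at h1; subst h1; exact h2
  | cons a u ih =>
    rw [run_cons_iff] at h1
    obtain ⟨t, ht, hr⟩ := h1
    exact .cons ht (ih hr)

lemma run_singleton_iff {M : NFA' Q A} {q r : Q} {a : A} :
    M.Run q [a] r ↔ r ∈ M.step q a := by
  rw [run_cons_iff]
  constructor
  · rintro ⟨s, hs, hr⟩; rw [run_nil_iff] at hr; rwa [← hr]
  · intro h; exact ⟨r, h, .nil r⟩

lemma run_append_iff {M : NFA' Q A} {q r : Q} {u v : List A} :
    M.Run q (u ++ v) r ↔ ∃ s, M.Run q u s ∧ M.Run s v r := by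
  constructor
  · induction u generalizing q with
    | nil => intro h; exact ⟨q, .nil q, h⟩
    | cons a u ih =>
      intro h
      rw [List.cons_append, run_cons_iff] at h
      obtain ⟨s, hs, hr⟩ := h
      obtain ⟨t, h1, h2⟩ := ih hr
      exact ⟨t, .cons hs h1, h2⟩
  · rintro ⟨s, h1, h2⟩; exact h1.append' h2

lemma run_states {M : NFA' Q A} {q r : Q} {w : List A} (h : M.Run q w r) :
    ∃ f : ℕ → Q, f 0 = q ∧
      ∀ i j, i ≤ j → j ≤ w.length → M.Run (f i) ((w.drop i).take (j - i)) (f j) := by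
  induction h with
  | nil q =>
    refine ⟨fun _ => q, rfl, ?_⟩
    intro i j hij hj
    simp only [List.length_nil, Nat.le_zero] at hj
    subst hj
    interval_cases i
    exact .nil q
  | @cons p q' r' a w hs hr ih =>
    obtain ⟨f, hf0, hf⟩ := ih
    refine ⟨fun i => if i = 0 then p else f (i - 1), by simp, ?_⟩
    intro i j hij hj
    match i, j with
    | 0, 0 => simpa using Run.nil p
    | 0, j + 1 =>
      simp only [if_pos rfl, if_neg (Nat.succ_ne_zero j), Nat.add_sub_cancel,
        Nat.sub_zero, List.drop_zero, List.take_succ_cons]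
      exact .cons hs (by simpa [hf0] using hf 0 j (Nat.zero_le _) (by simpa using hj))
    | i + 1, j + 1 =>
      simp only [if_neg (Nat.succ_ne_zero i), if_neg (Nat.succ_ne_zero j),
        Nat.add_sub_cancel, List.drop_succ_cons, Nat.succ_sub_succ]
      exact hf i j (by omega) (by simpa using hj)

lemma exists_cycle_le [Fintype Q] {M : NFA' Q A} {q r : Q} {w : List A}
    (h : M.Run q w r) (hw : Fintype.card Q < w.length) :
    ∃ (s : Q) (v : List A), M.Run s v s ∧ v ≠ [] ∧ v.length ≤ Fintype.card Q := by
  obtain ⟨f, _, hf⟩ := run_states h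
  obtain ⟨i, j, hne, heq⟩ :=
    Fintype.exists_ne_map_eq_of_card_lt (fun i : Fin (Fintype.card Q + 1) => f i) (by simp)
  wlog hlt : (i : ℕ) < (j : ℕ) generalizing i j
  · have hij : (i:ℕ) ≠ (j:ℕ) := fun hc => hne (Fin.ext hc)
    exact this j i hne.symm heq.symm (by omega)
  · have hj : (j : ℕ) ≤ w.length := by have := j.isLt; omega
    refine ⟨f i, (w.drop i).take (j - i), ?_, ?_, ?_⟩
    · have := hf i j (le_of_lt hlt) hj
      rwa [← heq] at this
    · have : ((w.drop (i:ℕ)).take ((j:ℕ) - i)).length = (j : ℕ) - i := by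
        simp [List.length_take, List.length_drop]
        omega
      intro hnil
      rw [hnil] at this
      simp at this
      omega
    · have : ((w.drop (i:ℕ)).take ((j:ℕ) - i)).length = (j : ℕ) - i := by
        simp [List.length_take, List.length_drop]
        omega
      rw [this]
      omega

end NFA'


namespace PW

variable {A : Type}

lemma enumFrom_map {B : Type} (u : List A) :
    ∀ (g : ℕ → A → B) (m : ℕ),
      (u.zipIdx m).map (fun ka => g ka.2 ka.1) =
        u.zipIdx.map (fun ka => g (m + ka.2) ka.1) := by
  induction u with
  | nil => intro g m; simp
  | cons a u ih =>
    intro g m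
    simp only [List.zipIdx_cons, List.map_cons]
    rw [ih g (m + 1), ih (fun k b => g (m + k) b) 1]
    simp only [Nat.add_zero]
    have hk : ∀ k : ℕ, m + (1 + k) = m + 1 + k := by intro k; omega
    simp only [hk]

lemma posWord_nil (l n : ℕ) : posWord l n ([] : List A) = [] := rfl

lemma posWord_cons (l n : ℕ) (a : A) (u : List A) :
    posWord l n (a :: u) = (((n : ℕ) : ZMod l), a) :: posWord l (n + 1) u := by
  show ((a :: u).zipIdx 0).map _ = _
  rw [List.zipIdx_cons]
  simp only [List.map_cons, Nat.add_zero]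
  rw [enumFrom_map u (fun k b => (((n + k : ℕ) : ZMod l), b)) 1]
  show _ = _ :: (u.zipIdx 0).map _
  rw [enumFrom_map u (fun k b => (((n + 1 + k : ℕ) : ZMod l), b)) 0]
  have hk : ∀ k : ℕ, n + (1 + k) = n + 1 + (0 + k) := by intro k; omega
  simp only [hk]

lemma posWord_length (l n : ℕ) (u : List A) : (posWord l n u).length = u.length := by
  simp [posWord]

lemma posWord_mod (l : ℕ) {n n' : ℕ} (h : ((n : ℕ) : ZMod l) = ((n' : ℕ) : ZMod l))
    (u : List A) : posWord l n u = posWord l n' u := by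
  induction u generalizing n n' with
  | nil => rfl
  | cons a u ih =>
    have h2 : (((n + 1 : ℕ)) : ZMod l) = (((n' + 1 : ℕ)) : ZMod l) := by
      push_cast
      rw [h]
    rw [posWord_cons, posWord_cons, h, ih h2]

lemma posWord_append (l n : ℕ) (u v : List A) :
    posWord l n (u ++ v) = posWord l n u ++ posWord l (n + u.length) v := by
  induction u generalizing n with
  | nil => simp [posWord_nil]
  | cons a u ih =>
    simp only [List.cons_append, posWord_cons, ih (n+1), List.length_cons]
    congr 3
    omega

lemma posWord_map_snd (l n : ℕ) (u : List A) : (posWord l n u).map Prod.snd = u := by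
  induction u generalizing n with
  | nil => rfl
  | cons a u ih => rw [posWord_cons]; simp [ih]

lemma posWord_eq_nil_iff {l n : ℕ} {u : List A} : posWord l n u = [] ↔ u = [] := by
  constructor
  · intro h; have := posWord_length l n u; rw [h] at this; simpa using this.symm
  · rintro rfl; rfl

lemma posWord_tail (l n : ℕ) (a : A) (u : List A) :
    (posWord l n (a :: u)).tail = posWord l (n + 1) u := by
  rw [posWord_cons]; rfl

lemma posWord_dropLast (l n : ℕ) (u : List A) :
    (posWord l n u).dropLast = posWord l n u.dropLast := by
  induction u generalizing n with
  | nil => rfl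
  | cons a u ih =>
    cases u with
    | nil => rfl
    | cons b v =>
      rw [posWord_cons, List.dropLast_cons_of_ne_nil (by simp [posWord_eq_nil_iff]), ih,
        show (a :: b :: v).dropLast = a :: (b :: v).dropLast from rfl, posWord_cons]

end PW


namespace MBF

open NFA' PW

variable {Q A : Type}

lemma zmod_val_cast (l : ℕ) [NeZero l] (x : ZMod l) : ((x.val : ℕ) : ZMod l) = x := by
  rw [ZMod.natCast_val, ZMod.cast_id]

noncomputable def dl (M : NFA' Q A) (l : ℕ) (hSC : M.StronglyConnected) (s t : Q) : ZMod l :=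
  (((hSC s t).choose.length : ℕ) : ZMod l)

lemma dl_run (M : NFA' Q A) (l : ℕ) (hSC : M.StronglyConnected) (s t : Q) :
    M.Run s (hSC s t).choose t := (hSC s t).choose_spec

section Delta

variable {M : NFA' Q A} {l : ℕ} (hSC : M.StronglyConnected)
  (hdvd : ∀ (q : Q) (w : List A), w ≠ [] → M.Run q w q → l ∣ w.length)

include hSC hdvd in
lemma run_length_cast {s t : Q} {w w' : List A} (h : M.Run s w t) (h' : M.Run s w' t) :
    ((w.length : ℕ) : ZMod l) = ((w'.length : ℕ) : ZMod l) := by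
  obtain ⟨v, hv⟩ := hSC t s
  have key : ∀ u : List A, M.Run s u t → (((u ++ v).length : ℕ) : ZMod l) = 0 := by
    intro u hu
    have hc : M.Run s (u ++ v) s := hu.append' hv
    have : l ∣ (u ++ v).length := by
      rcases eq_or_ne (u ++ v) [] with hnil | hnil
      · simp [hnil]
      · exact hdvd _ _ hnil hc
    exact (ZMod.natCast_eq_zero_iff _ _).mpr this
  have k1 := key w h
  have k2 := key w' h'
  simp only [List.length_append, Nat.cast_add] at k1 k2
  have : (w.length : ZMod l) + (v.length : ZMod l) = (w'.length : ZMod l) + (v.length : ZMod l) := by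
    rw [k1, k2]
  exact add_right_cancel this

include hSC hdvd in
lemma dl_eq {s t : Q} {w : List A} (h : M.Run s w t) :
    ((w.length : ℕ) : ZMod l) = dl M l hSC s t :=
  run_length_cast hSC hdvd h (dl_run M l hSC s t)

include hdvd in
lemma dl_self (s : Q) : dl M l hSC s s = (0 : ZMod l) := by
  have := dl_eq hSC hdvd (Run.nil (M := M) s)
  simpa using this.symm

end Delta

def Sset (M : NFA' Q A) (l : ℕ) (hSC : M.StronglyConnected) (x : ZMod l) (u : List A) :
    Set Q :=
  {q' | ∃ q, dl M l hSC M.init q = x ∧ M.Run q u q'}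

section SsetLemmas

variable {M : NFA' Q A} {l : ℕ} (hSC : M.StronglyConnected)

lemma Sset_nil (x : ZMod l) : Sset M l hSC x [] = {q | dl M l hSC M.init q = x} := by
  ext q'
  simp only [Sset, Set.mem_setOf_eq, run_nil_iff]
  constructor
  · rintro ⟨q, h, rfl⟩; exact h
  · intro h; exact ⟨q', h, rfl⟩

lemma Sset_concat (x : ZMod l) (u : List A) (a : A) :
    Sset M l hSC x (u ++ [a]) = {q' | ∃ q ∈ Sset M l hSC x u, q' ∈ M.step q a} := by
  ext q'
  simp only [Sset, Set.mem_setOf_eq]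
  constructor
  · rintro ⟨q, hq, hr⟩
    rw [run_append_iff] at hr
    obtain ⟨s, h1, h2⟩ := hr
    rw [run_singleton_iff] at h2
    exact ⟨s, ⟨q, hq, h1⟩, h2⟩
  · rintro ⟨s, ⟨q, hq, h1⟩, h2⟩
    exact ⟨q, hq, h1.append' (run_singleton_iff.mpr h2)⟩

lemma Sset_singleton (x : ZMod l) (a : A) :
    Sset M l hSC x [a] = {q' | ∃ q, dl M l hSC M.init q = x ∧ q' ∈ M.step q a} := by
  have h := Sset_concat (M := M) (l := l) hSC x [] a
  simp only [List.nil_append] at h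
  rw [h]
  ext q'
  simp only [Set.mem_setOf_eq, Sset_nil]

end SsetLemmas

section Infix

variable {l : ℕ} [NeZero l]

lemma posWord_infix_iff {x : ZMod l} {a : A} {u w : List A} :
    posWord l x.val (a :: u) <:+: posWord l 0 w ↔
      ∃ w₁ w₂, w = w₁ ++ (a :: u) ++ w₂ ∧ ((w₁.length : ℕ) : ZMod l) = x := by
  constructor
  · rintro ⟨s, t, hst⟩
    refine ⟨s.map Prod.snd, t.map Prod.snd, ?_, ?_⟩
    · have := congrArg (List.map Prod.snd) hst
      simp only [List.map_append, posWord_map_snd] at this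
      rw [← this]
    · have hw : w = (s.map Prod.snd) ++ ((a :: u) ++ (t.map Prod.snd)) := by
        have := congrArg (List.map Prod.snd) hst
        simp only [List.map_append, posWord_map_snd] at this
        rw [← this]; simp [posWord_map_snd]
      rw [hw, posWord_append] at hst
      rw [List.append_assoc] at hst
      have hlen : s.length = (posWord l 0 (s.map Prod.snd)).length := by
        have := congrArg List.length hst
        simp only [List.length_append, posWord_length, List.length_map] at this ⊢
      obtain ⟨hs, hrest⟩ := List.append_inj hst hlen
      rw [posWord_append] at hrest
      have hlen2 : (posWord l x.val (a :: u)).length =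
          (posWord l (0 + (s.map Prod.snd).length) (a :: u)).length := by
        simp [posWord_length]
      obtain ⟨hmid, _⟩ := List.append_inj hrest hlen2
      rw [posWord_cons, posWord_cons] at hmid
      have hinj := (List.cons.injEq _ _ _ _).mp hmid
      have h1 := (Prod.mk.injEq _ _ _ _).mp hinj.1
      have h2 : ((x.val : ℕ) : ZMod l) = (((List.map Prod.snd s).length : ℕ) : ZMod l) := by
        simpa using h1.1
      rw [zmod_val_cast] at h2
      exact h2.symm
  · rintro ⟨w₁, w₂, rfl, hx⟩
    refine ⟨posWord l 0 w₁, posWord l (0 + w₁.length + (a :: u).length) w₂, ?_⟩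
    have hmid : posWord l x.val (a :: u) = posWord l (0 + w₁.length) (a :: u) := by
      apply posWord_mod
      rw [zmod_val_cast]
      simpa using hx.symm
    rw [hmid, List.append_assoc, ← posWord_append, ← posWord_append, List.append_assoc]

end Infix

end MBF


namespace MBF
open NFA' PW

variable {Q A : Type}

section Blocking

variable {M : NFA' Q A} {l : ℕ} [NeZero l] (hSC : M.StronglyConnected)
  (hdvd : ∀ (q : Q) (w : List A), w ≠ [] → M.Run q w q → l ∣ w.length)

include hSC hdvd in
lemma blocking_iff (hF : M.final.Nonempty) (x : ZMod l) (a : A) (u : List A) :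
    M.Blocking l (posWord l x.val (a :: u)) ↔ Sset M l hSC x (a :: u) = ∅ := by
  constructor
  · intro hb
    rw [Set.eq_empty_iff_forall_notMem]
    rintro q' ⟨q, hq, hr⟩
    obtain ⟨f, hf⟩ := hF
    have hrw₁ : M.Run M.init (hSC M.init q).choose q := (hSC M.init q).choose_spec
    have hrw₂ : M.Run q' (hSC q' f).choose f := (hSC q' f).choose_spec
    have hlang : ((hSC M.init q).choose ++ (a :: u) ++ (hSC q' f).choose) ∈ M.lang :=
      ⟨f, hf, (hrw₁.append' hr).append' hrw₂⟩
    have hinf : posWord l x.val (a :: u) <:+: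
        posWord l 0 ((hSC M.init q).choose ++ (a :: u) ++ (hSC q' f).choose) :=
      posWord_infix_iff.mpr ⟨_, _, rfl, by rw [dl_eq hSC hdvd hrw₁]; exact hq⟩
    exact hb.2 _ ⟨0, _, rfl⟩ hinf ⟨_, hlang, rfl⟩
  · intro hS
    refine ⟨⟨x.val, a :: u, rfl⟩, ?_⟩
    rintro μ hpos hinf ⟨w, ⟨f, hf, hrun⟩, rfl⟩
    obtain ⟨w₁, w₂, rfl, hx⟩ := posWord_infix_iff.mp hinf
    rw [run_append_iff] at hrun
    obtain ⟨q', h12, hr2⟩ := hrun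
    rw [run_append_iff] at h12
    obtain ⟨q, h1, hmid⟩ := h12
    have hmem : q' ∈ Sset M l hSC x (a :: u) :=
      ⟨q, (dl_eq hSC hdvd h1).symm.trans hx, hmid⟩
    rw [hS] at hmem
    exact hmem

include hSC in
lemma not_blocking_nil (hF : M.final.Nonempty) :
    ¬ M.Blocking l ([] : List (ZMod l × A)) := by
  intro hb
  obtain ⟨f, hf⟩ := hF
  have hr : M.Run M.init (hSC M.init f).choose f := (hSC M.init f).choose_spec
  exact hb.2 (posWord l 0 (hSC M.init f).choose) ⟨0, _, rfl⟩ List.nil_infix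
    ⟨_, ⟨f, hf, hr⟩, rfl⟩

lemma blocking_all (hFe : M.final = ∅) {τ : List (ZMod l × A)} (hpos : IsPosWord l τ) :
    M.Blocking l τ := by
  refine ⟨hpos, ?_⟩
  rintro μ _ _ ⟨w, ⟨f, hf, _⟩, rfl⟩
  rw [hFe] at hf
  exact hf

lemma blocking_of_infix {μ τ : List (ZMod l × A)} (hμ : M.Blocking l μ) (hinf : μ <:+: τ)
    (hτ : IsPosWord l τ) : M.Blocking l τ :=
  ⟨hτ, fun ρ hρ hinf2 => hμ.2 ρ hρ (hinf.trans hinf2)⟩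

lemma infix_tail_or_dropLast {α : Type} {μ τ : List α} (h : μ <:+: τ) (hne : μ ≠ τ) :
    μ <:+: τ.tail ∨ μ <:+: τ.dropLast := by
  obtain ⟨s, t, rfl⟩ := h
  cases s with
  | cons d s' =>
    left
    exact ⟨s', t, rfl⟩
  | nil =>
    cases t with
    | nil => simp at hne
    | cons c t' =>
      right
      refine ⟨[], (c :: t').dropLast, ?_⟩
      simp only [List.nil_append]
      rw [List.dropLast_append_cons]

end Blocking

section MinB

variable {M : NFA' Q A} {l : ℕ} [NeZero l] (hSC : M.StronglyConnected)
  (hdvd : ∀ (q : Q) (w : List A), w ≠ [] → M.Run q w q → l ∣ w.length)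

-- tail of posWord with shifted residue
lemma posWord_tail_val (x : ZMod l) (a : A) (u : List A) :
    (posWord l x.val (a :: u)).tail = posWord l (x + 1).val u := by
  rw [posWord_tail]
  apply posWord_mod
  push_cast
  rw [zmod_val_cast, zmod_val_cast]

include hSC hdvd in
lemma minBlocking_iff (hF : M.final.Nonempty) (x : ZMod l) (a : A) (u : List A) :
    M.MinBlocking l (posWord l x.val (a :: u)) ↔
      (Sset M l hSC x (a :: u) = ∅ ∧
        (u = [] ∨ (Sset M l hSC (x + 1) u).Nonempty) ∧
        (u = [] ∨ (Sset M l hSC x (a :: u.dropLast)).Nonempty)) := by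
  constructor
  · rintro ⟨hb, hmin⟩
    refine ⟨(blocking_iff hSC hdvd hF x a u).mp hb, ?_, ?_⟩
    · rcases eq_or_ne u [] with rfl | hu
      · exact Or.inl rfl
      · right
        obtain ⟨b, u', rfl⟩ := List.exists_cons_of_ne_nil hu
        have hne : (posWord l x.val (a :: b :: u')).tail ≠ posWord l x.val (a :: b :: u') := by
          intro hcontra
          have := congrArg List.length hcontra
          simp [posWord_length] at this
        have hnb := hmin _ (List.tail_suffix _).isInfix hne
        rw [posWord_tail_val] at hnb
        rw [blocking_iff hSC hdvd hF (x+1) b u'] at hnb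
        rwa [← Set.not_nonempty_iff_eq_empty, not_not] at hnb
    · rcases eq_or_ne u [] with rfl | hu
      · exact Or.inl rfl
      · right
        have hne : (posWord l x.val (a :: u)).dropLast ≠ posWord l x.val (a :: u) := by
          intro hcontra
          have hlen := congrArg List.length hcontra
          simp only [List.length_dropLast, posWord_length, List.length_cons] at hlen
          omega
        have hnb := hmin _ (List.dropLast_prefix _).isInfix hne
        rw [posWord_dropLast] at hnb
        have hshape : (a :: u).dropLast = a :: u.dropLast := by
          obtain ⟨b, u', rfl⟩ := List.exists_cons_of_ne_nil hu
          rfl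
        rw [hshape] at hnb
        rw [blocking_iff hSC hdvd hF x a u.dropLast] at hnb
        rwa [← Set.not_nonempty_iff_eq_empty, not_not] at hnb
  · rintro ⟨hS, hT, hD⟩
    refine ⟨(blocking_iff hSC hdvd hF x a u).mpr hS, ?_⟩
    intro μ hinf hne hbμ
    rcases infix_tail_or_dropLast hinf hne with hcase | hcase
    · -- μ infix of tail
      have hbt : M.Blocking l (posWord l x.val (a :: u)).tail := by
        refine blocking_of_infix hbμ hcase ?_
        rw [posWord_tail_val]
        exact ⟨(x+1).val, u, rfl⟩
      rw [posWord_tail_val] at hbt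
      rcases eq_or_ne u [] with rfl | hu
      · rw [posWord_nil] at hbt
        exact not_blocking_nil hSC hF hbt
      · obtain ⟨b, u', rfl⟩ := List.exists_cons_of_ne_nil hu
        rcases hT with h' | hT
        · exact List.cons_ne_nil b u' h'
        · rw [blocking_iff hSC hdvd hF (x+1) b u'] at hbt
          rw [hbt] at hT
          exact Set.not_nonempty_empty hT
    · have hbd : M.Blocking l (posWord l x.val (a :: u)).dropLast := by
        refine blocking_of_infix hbμ hcase ?_
        rw [posWord_dropLast]
        exact ⟨x.val, (a :: u).dropLast, rfl⟩
      rw [posWord_dropLast] at hbd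
      rcases eq_or_ne u [] with rfl | hu
      · have hd : (a :: ([] : List A)).dropLast = [] := rfl
        rw [hd, posWord_nil] at hbd
        exact not_blocking_nil hSC hF hbd
      · rcases hD with h' | hD
        · exact hu h'
        · obtain ⟨b, u', rfl⟩ := List.exists_cons_of_ne_nil hu
          have hshape : (a :: b :: u').dropLast = a :: (b :: u').dropLast := rfl
          rw [hshape] at hbd
          rw [blocking_iff hSC hdvd hF x a (b :: u').dropLast] at hbd
          rw [hbd] at hD
          exact Set.not_nonempty_empty hD

end MinB
end MBF


namespace MBF
open NFA' PW

variable {Q A : Type}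

noncomputable def aut (M : NFA' Q A) (l : ℕ) (hSC : M.StronglyConnected) :
    NFA' (Option (ZMod l × Set Q × Option (Set Q) × Prop)) (ZMod l × A) where
  step st c :=
    match st with
    | none => {some (c.1 + 1, Sset M l hSC c.1 [c.2], none, True)}
    | some (pc, S, S', _) =>
      if c.1 = pc then
        {some (pc + 1, {q' | ∃ q ∈ S, q' ∈ M.step q c.2},
          some (match S' with
            | none => Sset M l hSC pc [c.2]
            | some T => {q' | ∃ q ∈ T, q' ∈ M.step q c.2}),
          S.Nonempty)}
      else ∅
  init := none
  final := {st | ∃ pc S' b, st = some (pc, (∅ : Set Q), S', b) ∧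
    (S' = none ∨ ∃ T, S' = some T ∧ T.Nonempty) ∧ b}

noncomputable def tgt (M : NFA' Q A) (l : ℕ) (hSC : M.StronglyConnected)
    (x : ZMod l) (a : A) (u : List A) : Option (ZMod l × Set Q × Option (Set Q) × Prop) :=
  some (x + ((u.length + 1 : ℕ) : ZMod l), Sset M l hSC x (a :: u),
    (match u with
      | [] => none
      | _ :: _ => some (Sset M l hSC (x + 1) u)),
    (match u with
      | [] => True
      | _ :: _ => (Sset M l hSC x (a :: u.dropLast)).Nonempty))

section Aut

variable {M : NFA' Q A} {l : ℕ} (hSC : M.StronglyConnected)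

lemma aut_step_none (c : ZMod l × A) :
    (aut M l hSC).step none c = {tgt M l hSC c.1 c.2 []} := by
  show ({some (c.1 + 1, Sset M l hSC c.1 [c.2], none, True)} : Set _) = _
  rw [tgt.eq_def]
  norm_num [Set.singleton_eq_singleton_iff]

lemma aut_step_some (pc : ZMod l) (S : Set Q) (S' : Option (Set Q)) (b : Prop)
    (c : ZMod l × A) :
    (aut M l hSC).step (some (pc, S, S', b)) c =
      if c.1 = pc then
        {some (pc + 1, {q' | ∃ q ∈ S, q' ∈ M.step q c.2},
          some (match S' with
            | none => Sset M l hSC pc [c.2]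
            | some T => {q' | ∃ q ∈ T, q' ∈ M.step q c.2}),
          S.Nonempty)}
      else ∅ := rfl

lemma aut_step_tgt (x : ZMod l) (a : A) (u : List A) (b : A) :
    (aut M l hSC).step (tgt M l hSC x a u) ((x + ((u.length + 1 : ℕ) : ZMod l)), b) =
      {tgt M l hSC x a (u ++ [b])} := by
  rw [tgt.eq_def, aut_step_some, if_pos rfl, Set.singleton_eq_singleton_iff, tgt.eq_def]
  cases u with
  | nil =>
    show some (x + ((0 + 1 : ℕ) : ZMod l) + 1,
        {q' | ∃ q ∈ Sset M l hSC x [a], q' ∈ M.step q b},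
        some (Sset M l hSC (x + ((0 + 1 : ℕ) : ZMod l)) [b]),
        (Sset M l hSC x [a]).Nonempty) =
      some (x + ((List.length [b] + 1 : ℕ) : ZMod l), Sset M l hSC x (a :: [b]),
        some (Sset M l hSC (x + 1) [b]), (Sset M l hSC x (a :: ([b].dropLast))).Nonempty)
    have h1 : x + ((0 + 1 : ℕ) : ZMod l) + 1 = x + ((List.length [b] + 1 : ℕ) : ZMod l) := by
      simp only [List.length_singleton]
      push_cast
      ring
    have h2 : {q' | ∃ q ∈ Sset M l hSC x [a], q' ∈ M.step q b} = Sset M l hSC x (a :: [b]) := by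
      rw [show (a :: [b]) = [a] ++ [b] from rfl, Sset_concat]
    have h3 : x + ((0 + 1 : ℕ) : ZMod l) = x + 1 := by norm_num
    have h4 : (a :: [b].dropLast) = [a] := by simp
    rw [h1, h2, h3, h4]
  | cons d u' =>
    show some (x + (((d :: u').length + 1 : ℕ) : ZMod l) + 1,
        {q' | ∃ q ∈ Sset M l hSC x (a :: d :: u'), q' ∈ M.step q b},
        some {q' | ∃ q ∈ Sset M l hSC (x + 1) (d :: u'), q' ∈ M.step q b},
        (Sset M l hSC x (a :: d :: u')).Nonempty) =
      some (x + (((d :: u' ++ [b]).length + 1 : ℕ) : ZMod l),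
        Sset M l hSC x (a :: (d :: u' ++ [b])),
        some (Sset M l hSC (x + 1) (d :: u' ++ [b])),
        (Sset M l hSC x (a :: ((d :: u' ++ [b]).dropLast))).Nonempty)
    have h1 : x + (((d :: u').length + 1 : ℕ) : ZMod l) + 1 =
        x + (((d :: u' ++ [b]).length + 1 : ℕ) : ZMod l) := by
      simp only [List.length_cons, List.length_append, List.length_nil]
      push_cast
      ring
    have h2 : {q' | ∃ q ∈ Sset M l hSC x (a :: d :: u'), q' ∈ M.step q b} =
        Sset M l hSC x (a :: (d :: u' ++ [b])) := by
      rw [show (a :: (d :: u' ++ [b])) = (a :: d :: u') ++ [b] from rfl, Sset_concat]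
    have h3 : {q' | ∃ q ∈ Sset M l hSC (x + 1) (d :: u'), q' ∈ M.step q b} =
        Sset M l hSC (x + 1) (d :: u' ++ [b]) := by
      rw [show (d :: u' ++ [b]) = (d :: u') ++ [b] from rfl, Sset_concat]
    have h4 : (a :: ((d :: u' ++ [b]).dropLast)) = a :: d :: u' := by
      rw [show (d :: u' ++ [b]) = (d :: u') ++ [b] from rfl, List.dropLast_concat]
    rw [h1, h2, h3, h4]

lemma aut_step_tgt_ne (x : ZMod l) (a : A) (u : List A) (c : ZMod l × A)
    (hne : c.1 ≠ x + ((u.length + 1 : ℕ) : ZMod l)) :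
    (aut M l hSC).step (tgt M l hSC x a u) c = ∅ := by
  rw [tgt.eq_def, aut_step_some, if_neg hne]

variable [NeZero l]

lemma posWord_singleton (n : ℕ) (b : A) :
    posWord l n [b] = [(((n : ℕ) : ZMod l), b)] := by
  rw [posWord_cons, posWord_nil]

lemma posWord_snoc (x : ZMod l) (a : A) (u : List A) (b : A) :
    posWord l x.val (a :: (u ++ [b])) =
      posWord l x.val (a :: u) ++ [((x + ((u.length + 1 : ℕ) : ZMod l)), b)] := by
  rw [show a :: (u ++ [b]) = (a :: u) ++ [b] from rfl, posWord_append, posWord_singleton]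
  have h : (((x.val + (a :: u).length : ℕ)) : ZMod l) =
      x + ((u.length + 1 : ℕ) : ZMod l) := by
    simp only [List.length_cons]
    push_cast
    rw [zmod_val_cast]
  rw [h]

lemma aut_run_bwd (u : List A) (x : ZMod l) (a : A) :
    (aut M l hSC).Run none (posWord l x.val (a :: u)) (tgt M l hSC x a u) := by
  induction u using List.reverseRecOn with
  | nil =>
    rw [show (a :: ([] : List A)) = [a] from rfl, posWord_singleton, zmod_val_cast]
    rw [run_singleton_iff, aut_step_none]
    rfl
  | append_singleton u b ih =>
    rw [posWord_snoc]
    refine ih.append' ?_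
    rw [run_singleton_iff, aut_step_tgt]
    rfl

lemma aut_run_fwd (τ : List (ZMod l × A))
    (st : Option (ZMod l × Set Q × Option (Set Q) × Prop))
    (h : (aut M l hSC).Run none τ st) :
    (τ = [] ∧ st = none) ∨
      ∃ x a u, τ = posWord l x.val (a :: u) ∧ st = tgt M l hSC x a u := by
  induction τ using List.reverseRecOn generalizing st with
  | nil =>
    rw [run_nil_iff] at h
    exact Or.inl ⟨rfl, h.symm⟩
  | append_singleton ρ c ih =>
    rw [run_append_iff] at h
    obtain ⟨s', h1, h2⟩ := h
    rw [run_singleton_iff] at h2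
    rcases ih s' h1 with ⟨rfl, rfl⟩ | ⟨x, a, u, rfl, rfl⟩
    · rw [aut_step_none, Set.mem_singleton_iff] at h2
      refine Or.inr ⟨c.1, c.2, [], ?_, h2⟩
      rw [show (c.2 :: ([] : List A)) = [c.2] from rfl, posWord_singleton, zmod_val_cast]
      simp
    · rcases eq_or_ne c.1 (x + ((u.length + 1 : ℕ) : ZMod l)) with hpc | hpc
      · have hc : c = ((x + ((u.length + 1 : ℕ) : ZMod l)), c.2) := by
          rw [← hpc]
        rw [hc, aut_step_tgt, Set.mem_singleton_iff] at h2
        refine Or.inr ⟨x, a, u ++ [c.2], ?_, h2⟩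
        rw [posWord_snoc, ← hc]
      · rw [aut_step_tgt_ne hSC x a u c hpc] at h2
        exact absurd h2 (Set.notMem_empty st)

lemma aut_lang (hdvd : ∀ (q : Q) (w : List A), w ≠ [] → M.Run q w q → l ∣ w.length)
    (hF : M.final.Nonempty) :
    (aut M l hSC).lang = {τ | M.MinBlocking l τ} := by
  ext τ
  simp only [Set.mem_setOf_eq]
  constructor
  · rintro ⟨st, hfin, hrun⟩
    rcases aut_run_fwd hSC _ _ hrun with ⟨rfl, rfl⟩ | ⟨x, a, u, rfl, rfl⟩
    · obtain ⟨pc, S', b, heq, -⟩ := hfin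
      exact absurd heq (by simp)
    · obtain ⟨pc, S', b, heq, hS', hb⟩ := hfin
      rw [minBlocking_iff hSC hdvd hF]
      cases u with
      | nil =>
        have hS : Sset M l hSC x [a] = ∅ := by
          have := congrArg (fun st => match st with
            | some p => p.2.1
            | none => ∅) heq
          exact this
        exact ⟨hS, Or.inl rfl, Or.inl rfl⟩
      | cons d u' =>
        have hS : Sset M l hSC x (a :: d :: u') = ∅ := by
          have := congrArg (fun st => match st with
            | some p => p.2.1
            | none => ∅) heq
          exact this
        have hS'2 : some (Sset M l hSC (x + 1) (d :: u')) = S' := by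
          have := congrArg (fun st => match st with
            | some p => p.2.2.1
            | none => none) heq
          exact this
        have hb2 : (Sset M l hSC x (a :: (d :: u').dropLast)).Nonempty = b := by
          have := congrArg (fun st => match st with
            | some p => p.2.2.2
            | none => False) heq
          exact this
        refine ⟨hS, Or.inr ?_, Or.inr ?_⟩
        · rcases hS' with h' | ⟨T, hT, hTne⟩
          · rw [← hS'2] at h'
            exact absurd h' (by simp)
          · rw [← hS'2, Option.some.injEq] at hT
            rwa [hT]
        · rw [← hb2] at hb
          exact hb
  · intro hmb
    obtain ⟨n, u₀, htau⟩ := hmb.1.1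
    subst htau
    cases u₀ with
    | nil =>
      rw [posWord_nil] at hmb
      exact absurd hmb.1 (not_blocking_nil hSC hF)
    | cons a u =>
      have hx : posWord l n (a :: u) = posWord l ((n : ZMod l)).val (a :: u) :=
        posWord_mod _ (by rw [zmod_val_cast]) _
      rw [hx] at hmb ⊢
      rw [minBlocking_iff hSC hdvd hF] at hmb
      obtain ⟨hS, hT, hD⟩ := hmb
      refine ⟨tgt M l hSC ((n : ZMod l)) a u, ?_, aut_run_bwd hSC u ((n : ZMod l)) a⟩
      cases u with
      | nil =>
        exact ⟨(n : ZMod l) + ((List.length ([] : List A) + 1 : ℕ) : ZMod l), none, True,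
          by rw [tgt.eq_def, hS], Or.inl rfl, trivial⟩
      | cons d u' =>
        have hT' : (Sset M l hSC ((n : ZMod l) + 1) (d :: u')).Nonempty := by
          rcases hT with h' | hT
          · exact absurd h' (by simp)
          · exact hT
        have hD' : (Sset M l hSC (n : ZMod l) (a :: (d :: u').dropLast)).Nonempty := by
          rcases hD with h' | hD
          · exact absurd h' (by simp)
          · exact hD
        exact ⟨(n : ZMod l) + (((d :: u').length + 1 : ℕ) : ZMod l),
          some (Sset M l hSC ((n : ZMod l) + 1) (d :: u')),
          (Sset M l hSC (n : ZMod l) (a :: (d :: u').dropLast)).Nonempty,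
          by rw [tgt.eq_def, hS], Or.inr ⟨_, rfl, hT'⟩, hD'⟩

end Aut
end MBF


namespace MBF
open NFA' PW

variable {Q A : Type}

lemma period_le_card [Fintype Q] {M : NFA' Q A} {l : ℕ}
    (hl : 0 < l)
    (hdvd : ∀ (q : Q) (w : List A), w ≠ [] → M.Run q w q → l ∣ w.length)
    (hgcd : ∀ d : ℕ, (∀ (q : Q) (w : List A), w ≠ [] → M.Run q w q → d ∣ w.length) → d ∣ l) :
    l ≤ Fintype.card Q := by
  have hex : ∃ (q : Q) (w : List A), w ≠ [] ∧ M.Run q w q := by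
    by_contra hno
    push_neg at hno
    have hd := hgcd (l + 1) (fun q w hw hr => absurd hr (hno q w hw))
    have := Nat.le_of_dvd hl hd
    omega
  obtain ⟨q, w, hw, hr⟩ := hex
  rcases le_or_gt w.length (Fintype.card Q) with hle | hlt
  · have hd := hdvd q w hw hr
    have h1 : 0 < w.length := List.length_pos_iff.mpr hw
    exact le_trans (Nat.le_of_dvd h1 hd) hle
  · obtain ⟨s, v, hrs, hv, hvle⟩ := exists_cycle_le hr hlt
    have hd := hdvd s v hv hrs
    have h1 : 0 < v.length := List.length_pos_iff.mpr hv
    exact le_trans (Nat.le_of_dvd h1 hd) hvle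

def relabel {S T Γ : Type} (e : S ≃ T) (N : NFA' S Γ) : NFA' T Γ where
  step t c := {t' | e.symm t' ∈ N.step (e.symm t) c}
  init := e N.init
  final := {t | e.symm t ∈ N.final}

lemma relabel_run {S T Γ : Type} (e : S ≃ T) (N : NFA' S Γ) {s s' : S} {w : List Γ}
    (h : N.Run s w s') : (relabel e N).Run (e s) w (e s') := by
  induction h with
  | nil => exact .nil _
  | @cons p qq r a ww hs _ ih =>
    exact .cons (q := e qq) (show e.symm (e qq) ∈ N.step (e.symm (e p)) a by simpa using hs) ih

lemma relabel_run' {S T Γ : Type} (e : S ≃ T) (N : NFA' S Γ) {t t' : T} {w : List Γ}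
    (h : (relabel e N).Run t w t') : N.Run (e.symm t) w (e.symm t') := by
  induction h with
  | nil => exact .nil _
  | cons hs _ ih => exact .cons hs ih

lemma relabel_lang {S T Γ : Type} (e : S ≃ T) (N : NFA' S Γ) :
    (relabel e N).lang = N.lang := by
  ext w
  constructor
  · rintro ⟨f, hf, hrun⟩
    have := relabel_run' e N hrun
    rw [show (relabel e N).init = e N.init from rfl, Equiv.symm_apply_apply] at this
    exact ⟨e.symm f, hf, this⟩
  · rintro ⟨f, hf, hrun⟩
    refine ⟨e f, show e.symm (e f) ∈ N.final by simpa using hf, ?_⟩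
    exact relabel_run e N hrun

lemma minBlocking_empty_iff {M : NFA' Q A} {l : ℕ} [NeZero l]
    (hFe : M.final = ∅) : {τ : List (ZMod l × A) | M.MinBlocking l τ} = {[]} := by
  ext τ
  simp only [Set.mem_setOf_eq, Set.mem_singleton_iff]
  constructor
  · rintro ⟨hb, hmin⟩
    obtain ⟨n, u, rfl⟩ := hb.1
    cases u with
    | nil => rw [posWord_nil]
    | cons a u' =>
      exfalso
      have hbt : M.Blocking l (posWord l n (a :: u')).tail := by
        rw [posWord_tail]
        exact blocking_all hFe ⟨n + 1, u', rfl⟩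
      refine hmin _ (List.tail_suffix _).isInfix ?_ hbt
      intro hcontra
      have := congrArg List.length hcontra
      simp [posWord_length] at this
  · rintro rfl
    refine ⟨blocking_all hFe ⟨0, [], (posWord_nil l 0).symm⟩, ?_⟩
    intro μ hinf hne
    rw [List.infix_nil] at hinf
    exact absurd hinf hne

end MBF


end AuxMBF

-- STATEMENT 7
theorem stmt7 :
    ∃ C : ℕ, ∀ (Q A : Type) [Fintype Q] [Fintype A] (M : NFA' Q A) (l : ℕ),
      M.StronglyConnected → M.IsPeriod l →
      ∃ (n : ℕ) (N : NFA' (Fin n) (ZMod l × A)),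
        n ≤ 2 ^ (C * Fintype.card Q) ∧
        N.lang = {τ | M.MinBlocking l τ} := by
  refine ⟨6, ?_⟩
  intro Q A _ _ M l hSC hP
  obtain ⟨hl, hdvd, hgcd⟩ := hP
  haveI : NeZero l := ⟨hl.ne'⟩
  have hm1 : 1 ≤ Fintype.card Q := Fintype.card_pos_iff.mpr ⟨M.init⟩
  have hlm : l ≤ Fintype.card Q := MBF.period_le_card hl hdvd hgcd
  have hX : 2 ≤ 2 ^ Fintype.card Q := by
    calc 2 = 2 ^ 1 := (pow_one 2).symm
    _ ≤ 2 ^ Fintype.card Q := Nat.pow_le_pow_right (by norm_num) hm1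
  rcases eq_or_ne M.final ∅ with hFe | hFne
  · refine ⟨1, ⟨fun _ _ => ∅, ⟨0, Nat.one_pos⟩, Set.univ⟩, ?_, ?_⟩
    · exact Nat.one_le_two_pow
    · have h1 : (NFA'.mk (fun _ _ => (∅ : Set (Fin 1))) ⟨0, Nat.one_pos⟩
          Set.univ : NFA' (Fin 1) (ZMod l × A)).lang = {[]} := by
        ext w
        constructor
        · rintro ⟨q, -, hrun⟩
          cases w with
          | nil => rfl
          | cons a w =>
            rw [NFA'.run_cons_iff] at hrun
            obtain ⟨s, hs, -⟩ := hrun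
            exact absurd hs (Set.notMem_empty s)
        · rintro rfl
          exact ⟨⟨0, Nat.one_pos⟩, Set.mem_univ _, .nil _⟩
      rw [h1, MBF.minBlocking_empty_iff hFe]
  · have hF : M.final.Nonempty := Set.nonempty_iff_ne_empty.mpr hFne
    refine ⟨Fintype.card (Option (ZMod l × Set Q × Option (Set Q) × Prop)),
      MBF.relabel (Fintype.equivFin _) (MBF.aut M l hSC), ?_, ?_⟩
    · have hcard : Fintype.card (Option (ZMod l × Set Q × Option (Set Q) × Prop)) =
          l * (2 ^ Fintype.card Q * ((2 ^ Fintype.card Q + 1) * 2)) + 1 := by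
        simp [Fintype.card_option, Fintype.card_prod, Fintype.card_set, ZMod.card,
          Fintype.card_prop]
      rw [hcard]
      set X := 2 ^ Fintype.card Q with hXdef
      have hlX : l ≤ X := le_trans hlm (le_of_lt Nat.lt_two_pow_self)
      have h6 : (2 : ℕ) ^ (6 * Fintype.card Q) = X ^ 6 := by
        rw [hXdef, ← pow_mul, Nat.mul_comm]
      rw [h6]
      calc l * (X * ((X + 1) * 2)) + 1
          ≤ X * (X * ((X + X) * 2)) + 1 := by gcongr <;> omega
        _ = 4 * X ^ 3 + 1 := by ring
        _ ≤ 4 * X ^ 3 + X ^ 3 := by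
            have : 1 ≤ X ^ 3 := Nat.one_le_pow _ _ (by omega)
            omega
        _ = 5 * X ^ 3 := by ring
        _ ≤ X ^ 3 * X ^ 3 := by
            have h5 : 5 ≤ X ^ 3 := by
              calc (5 : ℕ) ≤ 2 ^ 3 := by norm_num
              _ ≤ X ^ 3 := Nat.pow_le_pow_left hX 3
            exact Nat.mul_le_mul_right _ h5
        _ = X ^ 6 := by ring
    · rw [MBF.relabel_lang, MBF.aut_lang hSC hdvd hF]
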